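/- arXiv:2604.04377 — 2 statements merged into one kernel-verified Lean document; each statement's English description precedes it below -/
import Mathlib

section
/- With ≡_χ the equivalence relation on positions of w generated from super-maximal right extensions (as in Definition of position equivalence by suffixient sets), for all positions i, j of w: i ≡_χ j if and only if w[i] = w[j]. In particular, the number of equivalence classes of ≡_χ equals σ(w), the number of distinct characters of w. -/
/-- `u` occurs in `w` starting at 1-indexed position `i`. -/
def occursAt {α : Type*} (w u : List α) (i : ℕ) : Prop :=
  1 ≤ i ∧ i + u.length ≤ w.length + 1 ∧ (w.drop (i - 1)).take u.length = u

/-- `u` is a right extension in `w`: `u = x ++ [c]`, both `x++[c]` and `x++[c']`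
occur in `w` for some `c' ≠ c`. -/
def RightExt {α : Type*} (w u : List α) : Prop :=
  ∃ (x : List α) (c c' : α), c ≠ c' ∧ u = x ++ [c] ∧
    (x ++ [c]) <:+: w ∧ (x ++ [c']) <:+: w

/-- super-maximal right extension: not a proper suffix of another right extension. -/
def SupMaxExt {α : Type*} (w u : List α) : Prop :=
  RightExt w u ∧ ∀ v, RightExt w v → u <:+ v → u = v

def SRE {α : Type*} (w : List α) : Set (List α) := {u | SupMaxExt w u}

noncomputable def chi {α : Type*} (w : List α) : ℕ := (SRE w).ncard

/-- `w` ends with a character that occurs nowhere else. -/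
def UniqueTerm {α : Type*} (w : List α) : Prop :=
  ∃ (v : List α) (d : α), w = v ++ [d] ∧ d ∉ v

/-- substring equation system -/
structure SES (α : Type*) where
  n : ℕ
  Eqs : Finset (ℕ × ℕ × ℕ)
  Ch : Finset (ℕ × α)

def SES.valid {α : Type*} (E : SES α) : Prop :=
  (∀ e ∈ E.Eqs, 1 ≤ e.1 ∧ 1 ≤ e.2.1 ∧ 1 ≤ e.2.2 ∧
      e.1 + e.2.2 ≤ E.n + 1 ∧ e.2.1 + e.2.2 ≤ E.n + 1) ∧
  (∀ kc ∈ E.Ch, 1 ≤ kc.1 ∧ kc.1 ≤ E.n)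

def SES.sat {α : Type*} (E : SES α) (w : List α) : Prop :=
  w.length = E.n ∧
  (∀ e ∈ E.Eqs, (w.drop (e.1 - 1)).take e.2.2 = (w.drop (e.2.1 - 1)).take e.2.2) ∧
  (∀ kc ∈ E.Ch, w[kc.1 - 1]? = some kc.2)

def SES.represents {α : Type*} (E : SES α) (w : List α) : Prop :=
  E.sat w ∧ ∀ w' : List α, E.sat w' → w' = w

def SES.size {α : Type*} (E : SES α) : ℕ := E.Eqs.card + E.Ch.card

/-- minimum size of a valid SES representing `w` -/
noncomputable def sVal {α : Type*} (w : List α) : ℕ :=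
  sInf {k | ∃ E : SES α, E.valid ∧ E.represents w ∧ E.size = k}

/-- bidirectional macro scheme machinery -/
def phraseLen {α : Type*} : α ⊕ (ℕ × ℕ) → ℕ
  | Sum.inl _ => 1
  | Sum.inr (_, ℓ) => ℓ

def startPos {α : Type*} (ph : List (α ⊕ (ℕ × ℕ))) (t : ℕ) : ℕ :=
  1 + ((ph.take t).map phraseLen).sum

/-- the phrase list `ph` is a (content-correct) macro scheme for `w` -/
def BMSFor {α : Type*} (w : List α) (ph : List (α ⊕ (ℕ × ℕ))) : Prop :=
  (ph.map phraseLen).sum = w.length ∧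
  ∀ t (h : t < ph.length),
    match ph.get ⟨t, h⟩ with
    | Sum.inl c => w[startPos ph t - 1]? = some c
    | Sum.inr (p, ℓ) => 1 ≤ ℓ ∧ 1 ≤ p ∧ p + ℓ ≤ w.length + 1 ∧
        (w.drop (startPos ph t - 1)).take ℓ = (w.drop (p - 1)).take ℓ

/-- the transition function τ (on 0-based offsets) -/
def tauAux {α : Type*} : List (α ⊕ (ℕ × ℕ)) → ℕ → Option ℕ
  | [], _ => none
  | (Sum.inl _) :: rest, i => if i = 0 then none else tauAux rest (i - 1)
  | (Sum.inr (p, ℓ)) :: rest, i => if i < ℓ then some (p + i) else tauAux rest (i - ℓ)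

/-- τ on 1-indexed positions -/
def tauStep {α : Type*} (ph : List (α ⊕ (ℕ × ℕ))) (i : ℕ) : Option ℕ :=
  tauAux ph (i - 1)

/-- validity: every position reaches ⊥ after finitely many steps -/
def BMSValid {α : Type*} (ph : List (α ⊕ (ℕ × ℕ))) (n : ℕ) : Prop :=
  ∀ i, 1 ≤ i → i ≤ n →
    ∃ k, (fun o : Option ℕ => o.bind (tauStep ph))^[k] (some i) = none

noncomputable def bVal {α : Type*} (w : List α) : ℕ :=
  sInf {k | ∃ ph : List (α ⊕ (ℕ × ℕ)),
      BMSFor w ph ∧ BMSValid ph w.length ∧ ph.length = k}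

/-- string attractor -/
def IsAttractor {α : Type*} (w : List α) (Γ : Finset ℕ) : Prop :=
  (∀ p ∈ Γ, 1 ≤ p ∧ p ≤ w.length) ∧
  ∀ u : List α, u ≠ [] → u <:+: w →
    ∃ i, occursAt w u i ∧ ∃ p ∈ Γ, i ≤ p ∧ p ≤ i + u.length - 1

noncomputable def gammaVal {α : Type*} (w : List α) : ℕ :=
  sInf {k | ∃ Γ : Finset ℕ, IsAttractor w Γ ∧ Γ.card = k}

/-- Thue–Morse words over Bool (`false` = a, `true` = b) -/
def tm : ℕ → List Bool
  | 0 => [false]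
  | n + 1 => (tm n).flatMap (fun b => [b, !b])

/-- leftmost occurrence -/
def leftmostOcc {α : Type*} (w v : List α) (i : ℕ) : Prop :=
  occursAt w v i ∧ ∀ i', occursAt w v i' → i ≤ i'

/-- generating pairs of the equivalence `≡_χ` -/
def GenPair {α : Type*} (w : List α) (j j' : ℕ) : Prop :=
  ∃ (y z x : List α) (c c' : α) (i i' : ℕ),
    x ≠ [] ∧
    SupMaxExt w (y ++ x ++ [c]) ∧ SupMaxExt w (z ++ x ++ [c']) ∧
    (y = [] ∨ z = [] ∨ y.getLast? ≠ z.getLast?) ∧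
    leftmostOcc w (y ++ x ++ [c]) i ∧ leftmostOcc w (z ++ x ++ [c']) i' ∧
    ∃ k < x.length, j = i + y.length + k ∧ j' = i' + z.length + k

def chiEquiv {α : Type*} (w : List α) : ℕ → ℕ → Prop := Relation.EqvGen (GenPair w)
/-! Generating pairs only relate positions carrying the same letter, so `≡_χ` refines equality
of letters. Conversely, take two distinct positions carrying the same letter. Because of the
unique terminator the suffixes starting there branch: they share a nonempty longest common prefix
`X` followed by letters `d₁ ≠ d₂`, so `X d₁` and `X d₂` are right extensions. Each extends to a
super-maximal right extension, and `X` lies in the longest common suffix of these two, so their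
generating pair aligns some occurrence of `X d₁` with some occurrence of `X d₂` along `X`. Two
occurrences of the same string `X d₁` are related by induction on `|w| - |X|`, since they branch
in turn after a strictly longer common prefix. The classes are then the fibres of the letters. -/

section

open List

variable {α : Type*}

section Occurrences

variable {w u : List α}

theorem infix_iff_exists_prefix_drop : u <:+: w ↔ ∃ p, u <+: w.drop p := by
  rw [infix_iff_prefix_suffix]
  constructor
  · rintro ⟨t, hut, htw⟩
    exact ⟨_, suffix_iff_eq_drop.mp htw ▸ hut⟩
  · rintro ⟨p, h⟩
    exact ⟨_, h, drop_suffix p w⟩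

theorem getElem?_eq_of_prefix_drop {p k : ℕ} (h : u <+: w.drop p) (hk : k < u.length) :
    w[p + k]? = u[k]? := by
  obtain ⟨t, ht⟩ := h
  rw [← getElem?_drop, ← ht, getElem?_append_left hk]

theorem prefix_drop_of_append_prefix_drop {a : List α} {p : ℕ} (h : a ++ u <+: w.drop p) :
    u <+: w.drop (p + a.length) := by
  obtain ⟨t, ht⟩ := h
  exact ⟨t, by rw [← drop_drop, ← ht, append_assoc, drop_left]⟩

theorem occursAt.prefix_drop {i : ℕ} (h : occursAt w u i) : u <+: w.drop (i - 1) :=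
  prefix_iff_eq_take.mpr h.2.2.symm

theorem List.IsInfix.exists_leftmostOcc (h : u <:+: w) : ∃ i, leftmostOcc w u i := by
  obtain ⟨t, hut, htw⟩ := infix_iff_prefix_suffix.mp h
  rw [suffix_iff_eq_drop] at htw
  rw [htw] at hut
  have hocc : occursAt w u (w.length - t.length + 1) :=
    ⟨by omega, by have := hut.length_le; simp at this; omega, (prefix_iff_eq_take.mp hut).symm⟩
  exact ⟨_, Nat.sInf_mem (s := {i | occursAt w u i}) ⟨_, hocc⟩, fun _ hi => Nat.sInf_le hi⟩

end Occurrences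

theorem exists_maximal_common_prefix : ∀ {s t u : List α}, u <+: s → u <+: t →
    ∃ X y z, s = X ++ y ∧ t = X ++ z ∧ (y = [] ∨ z = [] ∨ y.head? ≠ z.head?) ∧ u <+: X
  | [], t, _, hs, _ => ⟨[], [], t, rfl, rfl, Or.inl rfl, hs⟩
  | s, [], _, _, ht => ⟨[], s, [], rfl, rfl, Or.inr (Or.inl rfl), ht⟩
  | a :: s, b :: t, u, hs, ht => by
    by_cases hab : a = b
    · subst hab
      obtain ⟨u', hu, hus, hut⟩ : ∃ u', (u = [] ∨ u = a :: u') ∧ u' <+: s ∧ u' <+: t := by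
        rcases prefix_cons_iff.mp hs with rfl | ⟨u', rfl, hus⟩
        · exact ⟨[], Or.inl rfl, nil_prefix, nil_prefix⟩
        · exact ⟨u', Or.inr rfl, hus, (cons_prefix_cons.mp ht).2⟩
      obtain ⟨X, y, z, rfl, rfl, hyz, huX⟩ := exists_maximal_common_prefix hus hut
      refine ⟨a :: X, y, z, rfl, rfl, hyz, ?_⟩
      rcases hu with rfl | rfl
      · exact nil_prefix
      · exact cons_prefix_cons.mpr ⟨rfl, huX⟩
    · refine ⟨[], a :: s, b :: t, rfl, rfl, Or.inr (Or.inr (by simpa using hab)), ?_⟩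
      rcases prefix_cons_iff.mp hs with rfl | ⟨u', rfl, -⟩
      · exact nil_prefix
      · exact absurd (cons_prefix_cons.mp ht).1 hab

theorem exists_maximal_common_suffix {s t u : List α} (hs : u <:+ s) (ht : u <:+ t) :
    ∃ X y z, s = y ++ X ∧ t = z ++ X ∧ (y = [] ∨ z = [] ∨ y.getLast? ≠ z.getLast?) ∧ u <:+ X := by
  obtain ⟨X, y, z, hsX, htX, hyz, huX⟩ :=
    exists_maximal_common_prefix (reverse_prefix.mpr hs) (reverse_prefix.mpr ht)
  refine ⟨X.reverse, y.reverse, z.reverse, ?_, ?_, by simpa using hyz, ?_⟩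
  · simpa using congrArg reverse hsX
  · simpa using congrArg reverse htX
  · rwa [← reverse_prefix, reverse_reverse]

theorem exists_branch_of_not_prefix {s t u : List α} (hst : ¬ s <+: t) (hts : ¬ t <+: s)
    (hs : u <+: s) (ht : u <+: t) :
    ∃ X d₁ d₂, d₁ ≠ d₂ ∧ u <+: X ∧ X ++ [d₁] <+: s ∧ X ++ [d₂] <+: t := by
  obtain ⟨X, y, z, rfl, rfl, hyz, huX⟩ := exists_maximal_common_prefix hs ht
  obtain ⟨d₁, y, rfl⟩ := exists_cons_of_ne_nil (l := y) (by rintro rfl; exact hst (by simp))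
  obtain ⟨d₂, z, rfl⟩ := exists_cons_of_ne_nil (l := z) (by rintro rfl; exact hts (by simp))
  exact ⟨X, d₁, d₂, by simpa using hyz, huX, ⟨y, by simp⟩, ⟨z, by simp⟩⟩

section Terminator

variable {w : List α}

theorem UniqueTerm.eq_length_sub_one_of_getElem?_eq {i : ℕ} (hw : UniqueTerm w)
    (h : w[i]? = w[w.length - 1]?) : i = w.length - 1 := by
  obtain ⟨v, d, rfl, hd⟩ := hw
  have hlast : (v ++ [d])[(v ++ [d]).length - 1]? = some d := by simp
  rw [hlast, getElem?_eq_some_iff] at h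
  obtain ⟨hi, hid⟩ := h
  simp only [length_append, length_singleton] at hi ⊢
  by_contra hne
  rw [getElem_append_left (by omega)] at hid
  exact hd (hid ▸ getElem_mem _)

theorem UniqueTerm.not_drop_prefix_drop (hw : UniqueTerm w) {p q : ℕ} (hp : p < w.length)
    (hpq : p ≠ q) : ¬ w.drop p <+: w.drop q := by
  intro h
  have hk : w.length - 1 - p < (w.drop p).length := by simp; omega
  have := getElem?_eq_of_prefix_drop h hk
  rw [getElem?_drop, show p + (w.length - 1 - p) = w.length - 1 by omega] at this
  have := hw.eq_length_sub_one_of_getElem?_eq this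
  omega

end Terminator

section RightExtensions

variable {w : List α}

theorem RightExt.infix {u : List α} (h : RightExt w u) : u <:+: w := by
  obtain ⟨x, c, c', -, rfl, hx, -⟩ := h
  exact hx

theorem RightExt.exists_supMaxExt {u : List α} (hu : RightExt w u) :
    ∃ v, SupMaxExt w v ∧ u <:+ v := by
  by_cases hmax : ∀ v, RightExt w v → u <:+ v → u = v
  · exact ⟨u, ⟨hu, hmax⟩, suffix_refl u⟩
  push Not at hmax
  obtain ⟨v, hv, huv, hne⟩ := hmax
  have : u.length < v.length := lt_of_le_of_ne huv.length_le (mt huv.eq_of_length hne)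
  have : v.length ≤ w.length := hv.infix.length_le
  obtain ⟨v', hv', hvv'⟩ := hv.exists_supMaxExt
  exact ⟨v', hv', huv.trans hvv'⟩
termination_by w.length - u.length

theorem rightExt_of_prefix_drop {x : List α} {c c' : α} {p q : ℕ} (hc : c ≠ c')
    (hp : x ++ [c] <+: w.drop p) (hq : x ++ [c'] <+: w.drop q) : RightExt w (x ++ [c]) :=
  ⟨x, c, c', hc, rfl, infix_iff_exists_prefix_drop.mpr ⟨p, hp⟩,
    infix_iff_exists_prefix_drop.mpr ⟨q, hq⟩⟩

end RightExtensions

section ChiEquiv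

variable {w : List α}

theorem GenPair.getElem?_eq {j j' : ℕ} (h : GenPair w j j') : w[j - 1]? = w[j' - 1]? := by
  obtain ⟨y, z, x, c, c', i, i', -, -, -, -, hi, hi', k, hk, rfl, rfl⟩ := h
  have hx : x <+: w.drop (i - 1 + y.length) :=
    (prefix_append x [c]).trans
      (prefix_drop_of_append_prefix_drop (by simpa using hi.1.prefix_drop))
  have hx' : x <+: w.drop (i' - 1 + z.length) :=
    (prefix_append x [c']).trans
      (prefix_drop_of_append_prefix_drop (by simpa using hi'.1.prefix_drop))
  have := hi.1.1
  have := hi'.1.1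
  rw [show i + y.length + k - 1 = i - 1 + y.length + k by omega,
    show i' + z.length + k - 1 = i' - 1 + z.length + k by omega,
    getElem?_eq_of_prefix_drop hx hk, getElem?_eq_of_prefix_drop hx' hk]

theorem chiEquiv.getElem?_eq {i j : ℕ} (h : chiEquiv w i j) : w[i - 1]? = w[j - 1]? := by
  induction h with
  | rel _ _ h => exact h.getElem?_eq
  | refl => rfl
  | symm _ _ _ ih => exact ih.symm
  | trans _ _ _ _ _ ih₁ ih₂ => exact ih₁.trans ih₂

-- Offsets `p` into `w.drop p` count from 0, positions in `chiEquiv` from 1.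
theorem exists_chiEquiv_of_rightExt {x : List α} {c₁ c₂ : α} (hx : x ≠ [])
    (h₁ : RightExt w (x ++ [c₁])) (h₂ : RightExt w (x ++ [c₂])) :
    ∃ p₁ p₂, x ++ [c₁] <+: w.drop p₁ ∧ x ++ [c₂] <+: w.drop p₂ ∧
      ∀ k < x.length, chiEquiv w (p₁ + k + 1) (p₂ + k + 1) := by
  obtain ⟨_, hv₁, a₁, rfl⟩ := h₁.exists_supMaxExt
  obtain ⟨_, hv₂, a₂, rfl⟩ := h₂.exists_supMaxExt
  obtain ⟨_, y, z, hy, hz, hyz, b, rfl⟩ :=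
    exists_maximal_common_suffix (suffix_append a₁ x) (suffix_append a₂ x)
  rw [← append_assoc, hy] at hv₁
  rw [← append_assoc, hz] at hv₂
  obtain ⟨i₁, hi₁⟩ := hv₁.1.infix.exists_leftmostOcc
  obtain ⟨i₂, hi₂⟩ := hv₂.1.infix.exists_leftmostOcc
  refine ⟨i₁ - 1 + (y ++ b).length, i₂ - 1 + (z ++ b).length,
    prefix_drop_of_append_prefix_drop (by simpa using hi₁.1.prefix_drop),
    prefix_drop_of_append_prefix_drop (by simpa using hi₂.1.prefix_drop), fun k hk => ?_⟩
  have hgen : GenPair w (i₁ + y.length + (b.length + k)) (i₂ + z.length + (b.length + k)) :=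
    ⟨y, z, b ++ x, c₁, c₂, i₁, i₂, by simp [hx], hv₁, hv₂, hyz, hi₁, hi₂, b.length + k,
      by simp; omega, rfl, rfl⟩
  have := hi₁.1.1
  have := hi₂.1.1
  rw [show i₁ - 1 + (y ++ b).length + k + 1 = i₁ + y.length + (b.length + k) by simp; omega,
    show i₂ - 1 + (z ++ b).length + k + 1 = i₂ + z.length + (b.length + k) by simp; omega]
  exact .rel _ _ hgen

theorem UniqueTerm.chiEquiv_of_prefix_drop (hw : UniqueTerm w) {u : List α} {p q : ℕ}
    (hp : u <+: w.drop p) (hq : u <+: w.drop q) {k : ℕ} (hk : k < u.length) :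
    chiEquiv w (p + k + 1) (q + k + 1) := by
  rcases eq_or_ne p q with rfl | hpq
  · exact .refl _
  have hpw : p < w.length := by have := hp.length_le; simp at this; omega
  have hqw : q < w.length := by have := hq.length_le; simp at this; omega
  obtain ⟨X, d₁, d₂, hd, huX, hX₁, hX₂⟩ := exists_branch_of_not_prefix
    (hw.not_drop_prefix_drop hpw hpq) (hw.not_drop_prefix_drop hqw hpq.symm) hp hq
  have hkX : k < X.length := lt_of_lt_of_le hk huX.length_le
  obtain ⟨p₁, p₂, hp₁, hp₂, hbridge⟩ :=
    exists_chiEquiv_of_rightExt (ne_nil_of_length_pos (by omega))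
      (rightExt_of_prefix_drop hd hX₁ hX₂) (rightExt_of_prefix_drop hd.symm hX₂ hX₁)
  have hkX' : k < (X ++ [d₁]).length := by simp; omega
  -- the next two facts give the decrease of `w.length - u.length`
  have : X.length + 1 ≤ w.length := by have := hX₁.length_le; simp at this; omega
  have := huX.length_le
  exact .trans _ _ _ (hw.chiEquiv_of_prefix_drop hX₁ hp₁ hkX') <| .trans _ _ _ (hbridge k hkX) <|
    .symm _ _ (hw.chiEquiv_of_prefix_drop hX₂ hp₂ (by simpa using hkX'))
termination_by w.length - u.length

theorem UniqueTerm.chiEquiv_iff (hw : UniqueTerm w) {i j : ℕ} (hi : 1 ≤ i) (hiw : i ≤ w.length)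
    (hj : 1 ≤ j) : chiEquiv w i j ↔ w[i - 1]? = w[j - 1]? := by
  refine ⟨chiEquiv.getElem?_eq, fun h => ?_⟩
  have hwi : w[i - 1]? = some w[i - 1] := getElem?_eq_getElem (by omega)
  have := hw.chiEquiv_of_prefix_drop (u := [w[i - 1]]) (k := 0)
    (singleton_prefix_iff_head?_eq_some.mpr (by rw [head?_drop, hwi]))
    (singleton_prefix_iff_head?_eq_some.mpr (by rw [head?_drop, ← h, hwi])) (by simp)
  rwa [show i - 1 + 0 + 1 = i by omega, show j - 1 + 0 + 1 = j by omega] at this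

end ChiEquiv

theorem mem_iff_exists_getElem?_sub_one {w : List α} {a : α} :
    a ∈ w ↔ ∃ i, 1 ≤ i ∧ i ≤ w.length ∧ w[i - 1]? = some a := by
  rw [mem_iff_getElem?]
  refine ⟨fun ⟨i, hi⟩ => ⟨i + 1, by omega, ?_, hi⟩, fun ⟨i, _, _, hi⟩ => ⟨i - 1, hi⟩⟩
  have := (List.getElem?_eq_some_iff.mp hi).1
  omega

theorem ncard_classes_eq_card_toFinset [DecidableEq α] (w : List α) (r : ℕ → ℕ → Prop)
    (hr : ∀ i j, 1 ≤ i → i ≤ w.length → 1 ≤ j → j ≤ w.length →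
      (r i j ↔ w[i - 1]? = w[j - 1]?)) :
    Set.ncard {s : Set ℕ | ∃ i, 1 ≤ i ∧ i ≤ w.length ∧
      s = {j | 1 ≤ j ∧ j ≤ w.length ∧ r i j}} = w.toFinset.card := by
  set fiber : α → Set ℕ := fun a => {j | 1 ≤ j ∧ j ≤ w.length ∧ w[j - 1]? = some a}
  have hclass : ∀ i a, 1 ≤ i → i ≤ w.length → w[i - 1]? = some a →
      {j | 1 ≤ j ∧ j ≤ w.length ∧ r i j} = fiber a := by
    intro i a hi hiw ha
    ext j
    refine ⟨fun ⟨hj, hjw, hij⟩ => ⟨hj, hjw, ?_⟩, fun ⟨hj, hjw, hja⟩ => ⟨hj, hjw, ?_⟩⟩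
    · rw [← ha, (hr i j hi hiw hj hjw).mp hij]
    · rw [hr i j hi hiw hj hjw, ha, hja]
  have himage : {s : Set ℕ | ∃ i, 1 ≤ i ∧ i ≤ w.length ∧
      s = {j | 1 ≤ j ∧ j ≤ w.length ∧ r i j}} = fiber '' w.toFinset := by
    ext s
    simp only [Set.mem_image, Finset.mem_coe, mem_toFinset, mem_iff_exists_getElem?_sub_one]
    constructor
    · rintro ⟨i, hi, hiw, rfl⟩
      have ha : w[i - 1]? = some w[i - 1] := getElem?_eq_getElem (by omega)
      exact ⟨_, ⟨i, hi, hiw, ha⟩, (hclass i _ hi hiw ha).symm⟩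
    · rintro ⟨a, ⟨i, hi, hiw, ha⟩, rfl⟩
      exact ⟨i, hi, hiw, (hclass i a hi hiw ha).symm⟩
  have hinj : Set.InjOn fiber w.toFinset := by
    intro a ha b _ hab
    obtain ⟨i, hi, hiw, hia⟩ := mem_iff_exists_getElem?_sub_one.mp (mem_toFinset.mp ha)
    have hib : i ∈ fiber b := hab ▸ ⟨hi, hiw, hia⟩
    exact Option.some.inj (hia.symm.trans hib.2.2)
  rw [himage, hinj.ncard_image, Set.ncard_coe_finset]

end

theorem stmt10 {α : Type*} [DecidableEq α] (w : List α) (hterm : UniqueTerm w) :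
    (∀ i j, 1 ≤ i → i ≤ w.length → 1 ≤ j → j ≤ w.length →
      (chiEquiv w i j ↔ w[i - 1]? = w[j - 1]?)) ∧
    Set.ncard {s : Set ℕ | ∃ i, 1 ≤ i ∧ i ≤ w.length ∧
      s = {j | 1 ≤ j ∧ j ≤ w.length ∧ chiEquiv w i j}} = w.toFinset.card := by
  have hchi : ∀ i j, 1 ≤ i → i ≤ w.length → 1 ≤ j → j ≤ w.length →
      (chiEquiv w i j ↔ w[i - 1]? = w[j - 1]?) :=
    fun _ _ hi hiw hj _ => hterm.chiEquiv_iff hi hiw hj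
  exact ⟨hchi, ncard_classes_eq_card_toFinset w (chiEquiv w) hchi⟩
end

section
/- For any non-parity-preserving pair of occurrences in the Thue–Morse word — i.e., any equation t_n[i..i+ℓ-1] = t_n[j..j+ℓ-1] holding with i ≢ j (mod 2) — the length satisfies ℓ ≤ 3. -/
/-!
Write `t` for the infinite Thue–Morse sequence: `tm n` is its prefix of length `2 ^ n`, and
`t (2k) = t k`, `t (2k + 1) = !t k`. Positions `2a, 2a + 1` carry a block `x, !x`, whereas
positions `2b + 1, 2b + 2` carry `!t b, t (b + 1)`. Hence a match of length 4 between an even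
and an odd position forces `t b = t (b + 1) = t (b + 2)`, which is impossible because one of the
pairs `(b, b + 1)`, `(b + 1, b + 2)` has the form `(2c, 2c + 1)`.
-/

lemma List.getElem?_flatMap_pair_two_mul {α β : Type*} (f g : α → β) (l : List α) (k : ℕ) :
    (l.flatMap fun x => [f x, g x])[2 * k]? = l[k]?.map f := by
  induction l generalizing k with
  | nil => simp
  | cons x xs ih => cases k <;> simp [mul_add, ih]

lemma List.getElem?_flatMap_pair_two_mul_add_one {α β : Type*} (f g : α → β) (l : List α)
    (k : ℕ) : (l.flatMap fun x => [f x, g x])[2 * k + 1]? = l[k]?.map g := by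
  induction l generalizing k with
  | nil => simp
  | cons x xs ih => cases k <;> simp [mul_add, ih]

/-- The Thue–Morse sequence, 0-indexed: the parity of the binary digit sum. -/
def tmSeq (n : ℕ) : Bool := decide (n.bits.count true % 2 = 1)

lemma tmSeq_two_mul (k : ℕ) : tmSeq (2 * k) = tmSeq k := by
  rcases Nat.eq_zero_or_pos k with rfl | hk
  · rfl
  · simp [tmSeq, Nat.bit0_bits k hk.ne']

lemma tmSeq_two_mul_add_one (k : ℕ) : tmSeq (2 * k + 1) = !tmSeq k := by
  unfold tmSeq
  rw [Nat.bit1_bits k]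
  rcases Nat.mod_two_eq_zero_or_one (k.bits.count true) with hm | hm <;>
    simp [Nat.add_mod, hm]

lemma tmSeq_no_three_equal (b : ℕ) :
    ¬ (tmSeq b = tmSeq (b + 1) ∧ tmSeq (b + 1) = tmSeq (b + 2)) := by
  have hne : ∀ c, tmSeq (2 * c) ≠ tmSeq (2 * c + 1) := fun c => by
    rw [tmSeq_two_mul, tmSeq_two_mul_add_one]
    exact Bool.self_ne_not _
  rintro ⟨h₁, h₂⟩
  obtain ⟨c, rfl | rfl⟩ : ∃ c, b = 2 * c ∨ b = 2 * c + 1 := ⟨b / 2, by omega⟩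
  · exact hne c h₁
  · exact hne (c + 1) h₂

lemma tmSeq_eq_succ_of_odd_shift (a b : ℕ)
    (h : ∀ k < 2, tmSeq (2 * a + k) = tmSeq (2 * b + 1 + k)) : tmSeq b = tmSeq (b + 1) := by
  have h₀ := h 0 (by norm_num)
  have h₁ := h 1 (by norm_num)
  rw [add_zero, add_zero, tmSeq_two_mul, tmSeq_two_mul_add_one] at h₀
  rw [show 2 * b + 1 + 1 = 2 * (b + 1) by ring, tmSeq_two_mul_add_one, tmSeq_two_mul] at h₁
  rw [← h₁, h₀, Bool.not_not]

lemma tmSeq_match_length_le_three (p q ℓ : ℕ) (hpq : p % 2 ≠ q % 2)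
    (h : ∀ k < ℓ, tmSeq (p + k) = tmSeq (q + k)) : ℓ ≤ 3 := by
  wlog hp : p % 2 = 0 generalizing p q
  · exact this q p hpq.symm (fun k hk => (h k hk).symm) (by omega)
  by_contra! hℓ
  obtain ⟨a, rfl⟩ : ∃ a, p = 2 * a := ⟨p / 2, by omega⟩
  obtain ⟨b, rfl⟩ : ∃ b, q = 2 * b + 1 := ⟨q / 2, by omega⟩
  refine tmSeq_no_three_equal b ⟨tmSeq_eq_succ_of_odd_shift a b fun k hk => h k (by omega),
    tmSeq_eq_succ_of_odd_shift (a + 1) (b + 1) fun k hk => ?_⟩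
  convert h (k + 2) (by omega) using 2 <;> ring

lemma tm_length (n : ℕ) : (tm n).length = 2 ^ n := by
  induction n with
  | zero => rfl
  | succ n ih => simp [tm, List.length_flatMap, ih, pow_succ]

lemma tm_getElem? (n k : ℕ) (hk : k < 2 ^ n) : (tm n)[k]? = some (tmSeq k) := by
  induction n generalizing k with
  | zero => simp_all [tm, tmSeq]
  | succ n ih =>
    rw [pow_succ] at hk
    obtain ⟨c, rfl | rfl⟩ : ∃ c, k = 2 * c ∨ k = 2 * c + 1 := ⟨k / 2, by omega⟩
    · simp [tm, List.getElem?_flatMap_pair_two_mul, tmSeq_two_mul, ih c (by omega)]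
    · simp [tm, List.getElem?_flatMap_pair_two_mul_add_one, tmSeq_two_mul_add_one,
        ih c (by omega)]

theorem stmt19_general (n i j ℓ : ℕ) (hi : 1 ≤ i) (hj : 1 ≤ j)
    (hib : i + ℓ ≤ 2 ^ n + 1)
    (heq : ((tm n).drop (i - 1)).take ℓ = ((tm n).drop (j - 1)).take ℓ)
    (hpar : i % 2 ≠ j % 2) : ℓ ≤ 3 := by
  have hlen : min ℓ (2 ^ n - (i - 1)) = min ℓ (2 ^ n - (j - 1)) := by
    simpa [tm_length] using congrArg List.length heq
  refine tmSeq_match_length_le_three (i - 1) (j - 1) ℓ (by omega) fun k hk => ?_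
  have hk' := congrArg (·[k]?) heq
  simp only [List.getElem?_take, hk, if_true, List.getElem?_drop] at hk'
  rwa [tm_getElem? n _ (by omega), tm_getElem? n _ (by omega), Option.some_inj] at hk'

theorem stmt19 (n i j ℓ : ℕ) (hi : 1 ≤ i) (hj : 1 ≤ j)
    (hib : i + ℓ ≤ 2 ^ n + 1) (hjb : j + ℓ ≤ 2 ^ n + 1)
    (heq : ((tm n).drop (i - 1)).take ℓ = ((tm n).drop (j - 1)).take ℓ)
    (hpar : i % 2 ≠ j % 2) : ℓ ≤ 3 :=
  stmt19_general n i j ℓ hi hj hib heq hpar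
end
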